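/- arXiv:1211.4560 — 2 statements merged into one kernel-verified Lean document; each statement's English description precedes it below -/
import Mathlib

section
/- The pullback of the area form on S² along the Hopf fibration is exact: π*Ω = 2 dA, where A is the connection one-form A(φ) = Im(φ† dφ) on S³ and Ω is the standard area form on S². -/
/-!
For every `φ ∈ ℂ²`, not only on `S³`,
`π*Ω(v, w) = 4|φ|² (|φ|² Im⟨v, w⟩ - Im(⟨v, φ⟩⟨φ, w⟩))`: up to the factor `|φ|²` coming from the
homogeneity of `π`, the pulled-back area form is four times the Kähler form `Im⟨·, ·⟩` of `ℂ²`
restricted to the complex orthogonal complement of `φ`. This is a polynomial identity once `π` and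
`dπ` are written in the coordinates `π(z, u) = (2 z̄u, |z|² - |u|²)`. On `S³` the tangency
conditions make `⟨v, φ⟩` and `⟨w, φ⟩` purely imaginary, so the correction term vanishes, and
`4 Im⟨v, w⟩ = 2 (Im⟨v, w⟩ - Im⟨w, v⟩) = 2 dA(v, w)`.
-/

open Complex

/-- The Pauli spin matrices. -/
def pauli : Fin 3 → Matrix (Fin 2) (Fin 2) ℂ
  | 0 => !![0, 1; 1, 0]
  | 1 => !![0, -Complex.I; Complex.I, 0]
  | 2 => !![1, 0; 0, -1]

/-- The Hopf map `π : ℂ² → ℝ³`, `π(φ)_α = φ†σ_αφ`, extended to all of `ℂ²`. -/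
noncomputable def hopfPauli (φ : Fin 2 → ℂ) : Fin 3 → ℝ := fun α =>
  (∑ a : Fin 2, ∑ b : Fin 2, (starRingEnd ℂ (φ a)) * pauli α a b * φ b).re

/-- The scalar triple product `x · (y × z)` in `ℝ³`. -/
def tripleProduct (x y z : Fin 3 → ℝ) : ℝ :=
  x 0 * (y 1 * z 2 - y 2 * z 1) + x 1 * (y 2 * z 0 - y 0 * z 2) +
    x 2 * (y 0 * z 1 - y 1 * z 0)

open ComplexConjugate

theorem fderiv_re_quadForm_apply {n : Type*} [Fintype n] (M : Matrix n n ℂ) (φ v : n → ℂ) :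
    fderiv ℝ (fun ψ : n → ℂ => (∑ a, ∑ b, conj (ψ a) * M a b * ψ b).re) φ v =
      (∑ a, ∑ b, (conj (v a) * M a b * φ b + conj (φ a) * M a b * v b)).re := by
  have h : HasFDerivAt (fun ψ : n → ℂ => (∑ a, ∑ b, conj (ψ a) * M a b * ψ b).re) _ φ :=
    reCLM.hasFDerivAt.comp φ <| HasFDerivAt.fun_sum (u := Finset.univ) fun a _ =>
      HasFDerivAt.fun_sum (u := Finset.univ) fun b _ =>
        ((conjCLE.hasFDerivAt.comp φ (hasFDerivAt_apply a φ)).mul_const (M a b)).mul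
          (hasFDerivAt_apply b φ)
  rw [h.fderiv]
  simp only [ContinuousLinearMap.comp_apply, reCLM_apply, sum_apply, add_apply, smul_apply,
    ContinuousLinearMap.proj_apply, Function.comp_apply, ContinuousLinearEquiv.coe_coe,
    conjCLE_apply, smul_eq_mul]
  congr 1
  exact Finset.sum_congr rfl fun a _ => Finset.sum_congr rfl fun b _ => by ring

theorem fderiv_hopfPauli_apply (φ v : Fin 2 → ℂ) (α : Fin 3) :
    fderiv ℝ hopfPauli φ v α =
      (∑ a, ∑ b, (conj (v a) * pauli α a b * φ b + conj (φ a) * pauli α a b * v b)).re := by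
  unfold hopfPauli
  rw [fderiv_pi fun α => by fun_prop]
  exact fderiv_re_quadForm_apply (pauli α) φ v

theorem hopfPauli_eq (φ : Fin 2 → ℂ) :
    hopfPauli φ = ![2 * (conj (φ 0) * φ 1).re, 2 * (conj (φ 0) * φ 1).im,
      ‖φ 0‖ ^ 2 - ‖φ 1‖ ^ 2] := by
  funext α
  fin_cases α <;>
    simp only [hopfPauli, pauli, Fin.sum_univ_two, Matrix.of_apply, Matrix.cons_val',
      Matrix.cons_val_fin_one, Matrix.cons_val_zero, Matrix.cons_val_one, Matrix.cons_val, add_re,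
      neg_re, neg_im, mul_re, mul_im, conj_re, conj_im, zero_re, zero_im, one_re, one_im, I_re,
      I_im, Fin.zero_eta, Fin.mk_one, Fin.reduceFinMk, Complex.sq_norm, normSq_apply] <;>
    ring

theorem fderiv_hopfPauli_eq (φ v : Fin 2 → ℂ) :
    fderiv ℝ hopfPauli φ v = ![2 * (conj (v 0) * φ 1 + conj (φ 0) * v 1).re,
      2 * (conj (v 0) * φ 1 + conj (φ 0) * v 1).im,
      2 * (conj (φ 0) * v 0 - conj (φ 1) * v 1).re] := by
  funext α
  fin_cases α <;>
    simp only [fderiv_hopfPauli_apply, pauli, Fin.sum_univ_two, Matrix.of_apply,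
      Matrix.cons_val', Matrix.cons_val_fin_one, Matrix.cons_val_zero, Matrix.cons_val_one,
      Matrix.cons_val, add_re, add_im, sub_re, neg_re, neg_im, mul_re, mul_im, conj_re, conj_im,
      zero_re, zero_im, one_re, one_im, I_re, I_im, Fin.zero_eta, Fin.mk_one, Fin.reduceFinMk] <;>
    ring

theorem tripleProduct_hopfPauli_fderiv (φ v w : Fin 2 → ℂ) :
    tripleProduct (hopfPauli φ) (fderiv ℝ hopfPauli φ v) (fderiv ℝ hopfPauli φ w) =
      4 * (∑ a, ‖φ a‖ ^ 2) * ((∑ a, ‖φ a‖ ^ 2) * (∑ a, conj (v a) * w a).im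
        - ((∑ a, conj (v a) * φ a) * conj (∑ a, conj (w a) * φ a)).im) := by
  rw [hopfPauli_eq, fderiv_hopfPauli_eq, fderiv_hopfPauli_eq]
  simp only [tripleProduct, Fin.sum_univ_two, Matrix.cons_val_zero, Matrix.cons_val_one,
    Matrix.cons_val_two, Matrix.head_cons, Matrix.tail_cons, Complex.sq_norm, normSq_apply, mul_re,
    mul_im, add_re, add_im, sub_re, conj_re, conj_im, map_add, map_mul, conj_conj]
  ring

/-- **The pullback of the area form of `S²` along the Hopf fibration is exact: `π*Ω = 2 dA`.**
Here `Ω(x)(δx,δy) = x · (δx × δy)` is the area form of `S²`, the pullback is computed with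
the (Fréchet) derivative of the Hopf map, `A` is the connection one-form
`A(φ)·v = Im⟨φ,v⟩ = Im(φ†v)` on `S³`, and its exterior derivative is
`dA(φ)(v,w) = Im⟨v,w⟩ − Im⟨w,v⟩`.  The identity holds at every `φ ∈ S³` and for all
tangent vectors `v, w` to `S³` at `φ`. -/
theorem hopf_pullback_area_form (φ v w : Fin 2 → ℂ)
    (hφ : ∑ a : Fin 2, ‖φ a‖ ^ 2 = 1)
    (hv : (∑ a : Fin 2, (starRingEnd ℂ (v a)) * φ a).re = 0)
    (hw : (∑ a : Fin 2, (starRingEnd ℂ (w a)) * φ a).re = 0) :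
    tripleProduct (hopfPauli φ) (fderiv ℝ hopfPauli φ v) (fderiv ℝ hopfPauli φ w) =
      2 * ((∑ a : Fin 2, (starRingEnd ℂ (v a)) * w a).im
            - (∑ a : Fin 2, (starRingEnd ℂ (w a)) * v a).im) := by
  have hvertical : ((∑ a, conj (v a) * φ a) * conj (∑ a, conj (w a) * φ a)).im = 0 := by
    simp only [mul_im, conj_re, conj_im, hv, hw, zero_mul, mul_zero, add_zero]
  have hswap : ∑ a, conj (w a) * v a = conj (∑ a, conj (v a) * w a) := by
    simp only [map_sum, map_mul, conj_conj, mul_comm]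
  rw [tripleProduct_hopfPauli_fderiv, hφ, hvertical, hswap, conj_im]
  ring
end

section
/- If a Hamiltonian H : ℂ² → ℝ satisfies the S¹-invariance H(e^{iθ}φ) = H(φ) for all θ, φ, then the implicit midpoint method −iΓ(φ^{n+1} − φ^n) + (h/2) D_{φ†}H(φ^{n+1/2}) = 0 (with φ^{n+1/2} = (φ^n + φ^{n+1})/2) is length-preserving: ‖φ^{n+1}‖ = ‖φ^n‖. -/
/-!
Differentiating `θ ↦ H (exp (θ I) • φ)` at `θ = 0` shows that `S¹`-invariance forces
`Re ⟪I • φ, D_{φ†}H φ⟫ = 0` for every `φ`. Pairing the midpoint equation with `I • φ^{1/2}`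
therefore kills the Hamiltonian term and leaves `Γ Re ⟪φ^{1/2}, φ¹ - φ⁰⟫ = 0`, and
`Re ⟪φ⁰ + φ¹, φ¹ - φ⁰⟫ = ‖φ¹‖² - ‖φ⁰‖²`.
-/

open Complex

section CircleInvariance

variable {E : Type*} [NormedAddCommGroup E] [NormedSpace ℂ E]

theorem hasDerivAt_cexp_mul_I_smul (φ : E) :
    HasDerivAt (fun θ : ℝ => exp (θ * I) • φ) (I • φ) 0 := by
  have hexp : HasDerivAt (fun θ : ℝ => exp (θ * I)) I 0 := by
    simpa using ((hasDerivAt_id (0 : ℝ)).ofReal_comp.mul_const I).cexp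
  simpa using hexp.smul_const φ

theorem fderiv_apply_I_smul_eq_zero {H : E → ℝ}
    (hinv : ∀ (θ : ℝ) (φ : E), H (exp (θ * I) • φ) = H φ) {φ : E}
    (hφ : DifferentiableAt ℝ H φ) :
    fderiv ℝ H φ (I • φ) = 0 := by
  have hcomp := hφ.hasFDerivAt.comp_hasDerivAt_of_eq 0 (hasDerivAt_cexp_mul_I_smul φ) (by simp)
  have hconst : (H ∘ fun θ : ℝ => exp (θ * I) • φ) = fun _ => H φ := funext (hinv · φ)
  rw [hconst] at hcomp
  exact hcomp.unique (hasDerivAt_const 0 (H φ))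

end CircleInvariance

section MidpointStep

variable {E : Type*} [NormedAddCommGroup E] [InnerProductSpace ℂ E]

theorem re_inner_half_smul_add_sub (x y : E) :
    re (inner ℂ ((1 / 2 : ℝ) • (x + y)) (y - x)) = (‖y‖ ^ 2 - ‖x‖ ^ 2) / 2 := by
  have hx := inner_self_eq_norm_sq (𝕜 := ℂ) x
  have hy := inner_self_eq_norm_sq (𝕜 := ℂ) y
  have hxy := inner_re_symm (𝕜 := ℂ) x y
  simp only [RCLike.re_to_complex] at hx hy hxy
  rw [RCLike.real_smul_eq_coe_smul (K := ℂ), inner_smul_real_left, smul_re, smul_eq_mul]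
  simp only [inner_add_left, inner_sub_right, sub_re, add_re]
  linear_combination (1 / 2 : ℝ) * (hy - hx + hxy)

theorem re_inner_I_smul_neg_I_mul_smul (Γ : ℝ) (x y : E) :
    re (inner ℂ (I • x) ((-I * Γ) • y)) = -Γ * re (inner ℂ x y) := by
  rw [inner_smul_left, inner_smul_right, conj_I, ← mul_assoc, ← mul_assoc]
  simp

theorem norm_eq_of_midpoint_step {Γ c : ℝ} (hΓ : Γ ≠ 0) {x₀ x₁ G : E}
    (hG : re (inner ℂ (I • (1 / 2 : ℝ) • (x₀ + x₁)) G) = 0)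
    (hstep : (-I * Γ) • (x₁ - x₀) + c • G = 0) :
    ‖x₁‖ = ‖x₀‖ := by
  have h := congrArg (fun v => re (inner ℂ (I • (1 / 2 : ℝ) • (x₀ + x₁)) v)) hstep
  rw [inner_add_right, add_re, re_inner_I_smul_neg_I_mul_smul, re_inner_half_smul_add_sub,
    RCLike.real_smul_eq_coe_smul (K := ℂ) c G, inner_smul_real_right, smul_re, hG, smul_zero,
    add_zero, inner_zero_right, zero_re] at h
  have hsq : ‖x₁‖ ^ 2 = ‖x₀‖ ^ 2 := by
    have := (mul_eq_zero.mp h).resolve_left (neg_ne_zero.mpr hΓ)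
    linarith
  exact (sq_eq_sq₀ (norm_nonneg _) (norm_nonneg _)).mp hsq

end MidpointStep

theorem EuclideanSpace.inner_eq_sum_conj_mul {ι : Type*} [Fintype ι] (v w : EuclideanSpace ℂ ι) :
    inner ℂ v w = ∑ a, starRingEnd ℂ (v a) * w a := by
  simp [PiLp.inner_apply, mul_comm]

theorem midpoint_method_S1_invariant_length_preserving_general
    (H : EuclideanSpace ℂ (Fin 2) → ℝ) (g : EuclideanSpace ℂ (Fin 2) → EuclideanSpace ℂ (Fin 2))
    (Γ h : ℝ) (hΓ : Γ ≠ 0)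
    (hdiff : Differentiable ℝ H)
    (hgrad : ∀ (φ v : EuclideanSpace ℂ (Fin 2)),
      fderiv ℝ H φ v = 2 * (∑ a : Fin 2, (starRingEnd ℂ (v a)) * g φ a).re)
    (hinv : ∀ (θ : ℝ) (φ : EuclideanSpace ℂ (Fin 2)),
      H (Complex.exp (θ * Complex.I) • φ) = H φ)
    (φ₀ φ₁ φm : EuclideanSpace ℂ (Fin 2))
    (hφm : φm = (1 / 2 : ℝ) • (φ₀ + φ₁))
    (hmid : (-(Complex.I) * (Γ : ℂ)) • (φ₁ - φ₀) + ((h / 2 : ℝ) • g φm) = 0) :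
    ‖φ₁‖ = ‖φ₀‖ := by
  have hg : re (inner ℂ (I • φm) (g φm)) = 0 := by
    have h := hgrad φm (I • φm)
    rw [fderiv_apply_I_smul_eq_zero hinv (hdiff φm), ← EuclideanSpace.inner_eq_sum_conj_mul] at h
    linarith
  subst hφm
  exact norm_eq_of_midpoint_step hΓ hg hmid

/-- **For an `S¹`-invariant Hamiltonian, the implicit midpoint method on `ℂ²` is
length-preserving.**  Here `g = D_{φ†}H` is the Wirtinger gradient of the real-valued
Hamiltonian `H`, characterized by `dH(φ)·v = 2 Re⟨v, g(φ)⟩`, and the midpoint method is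
`−iΓ(φ¹ − φ⁰) + (h/2) g(φ^{1/2}) = 0` with `φ^{1/2} = (φ⁰ + φ¹)/2`. -/
theorem midpoint_method_S1_invariant_length_preserving
    (H : EuclideanSpace ℂ (Fin 2) → ℝ) (g : EuclideanSpace ℂ (Fin 2) → EuclideanSpace ℂ (Fin 2))
    (Γ h : ℝ) (hΓ : Γ ≠ 0) (hh : 0 < h)
    (hdiff : Differentiable ℝ H)
    (hgrad : ∀ (φ v : EuclideanSpace ℂ (Fin 2)),
      fderiv ℝ H φ v = 2 * (∑ a : Fin 2, (starRingEnd ℂ (v a)) * g φ a).re)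
    (hinv : ∀ (θ : ℝ) (φ : EuclideanSpace ℂ (Fin 2)),
      H (Complex.exp (θ * Complex.I) • φ) = H φ)
    (φ₀ φ₁ φm : EuclideanSpace ℂ (Fin 2))
    (hφm : φm = (1 / 2 : ℝ) • (φ₀ + φ₁))
    (hmid : (-(Complex.I) * (Γ : ℂ)) • (φ₁ - φ₀) + ((h / 2 : ℝ) • g φm) = 0) :
    ‖φ₁‖ = ‖φ₀‖ :=
  midpoint_method_S1_invariant_length_preserving_general H g Γ h hΓ hdiff hgrad hinv φ₀ φ₁ φm hφm
    hmid
end
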